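/- arXiv:2307.08053 — 4 statements merged into one kernel-verified Lean document; each statement's English description precedes it below -/
import Mathlib

section
/- Let C ⊆ GF(q)^n be a linear code and u ∈ GF(q)^n. Then the dual of the extended code C̄(u) equals {(c - a·u, a) : c ∈ C^⊥, a ∈ GF(q)}, and consequently d(C̄(u)^⊥) ≤ d(C^⊥). -/
open Finset

variable {F : Type*} [Field F] [Fintype F] [DecidableEq F]

/-- The extended code of `C` by the vector `u`: append the coordinate `∑ uᵢ cᵢ`. -/
def extCode {n : ℕ} (C : Submodule F (Fin n → F)) (u : Fin n → F) :
    Submodule F (Fin (n + 1) → F) where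
  carrier := {x | (fun i => x i.castSucc) ∈ C ∧
    x (Fin.last n) = ∑ i, u i * x i.castSucc}
  add_mem' := by
    rintro a b ⟨ha, ha'⟩ ⟨hb, hb'⟩
    refine ⟨C.add_mem ha hb, ?_⟩
    simp only [Pi.add_apply, ha', hb', mul_add, Finset.sum_add_distrib]
  zero_mem' := ⟨C.zero_mem, by simp⟩
  smul_mem' := by
    rintro a x ⟨hx, hx'⟩
    refine ⟨C.smul_mem a hx, ?_⟩
    simp only [Pi.smul_apply, smul_eq_mul, hx', Finset.mul_sum]
    exact Finset.sum_congr rfl fun i _ => by ring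

/-- The (Euclidean) dual code. -/
def dualCode {n : ℕ} (C : Submodule F (Fin n → F)) : Submodule F (Fin n → F) where
  carrier := {x | ∀ c ∈ C, ∑ i, x i * c i = 0}
  add_mem' := by
    intro a b ha hb c hc
    simp only [Pi.add_apply, add_mul, Finset.sum_add_distrib, ha c hc, hb c hc, add_zero]
  zero_mem' := by intro c hc; simp
  smul_mem' := by
    intro a x hx c hc
    simp only [Pi.smul_apply, smul_eq_mul, mul_assoc, ← Finset.mul_sum, hx c hc, mul_zero]

/-- Minimum (Hamming) distance of a linear code: least weight of a nonzero codeword. -/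
noncomputable def minDist {n : ℕ} (C : Submodule F (Fin n → F)) : ℕ :=
  sInf {w | ∃ c ∈ C, c ≠ 0 ∧ hammingNorm c = w}

/-- Number of codewords of Hamming weight `w`. -/
noncomputable def weightCount {n : ℕ} (C : Submodule F (Fin n → F)) (w : ℕ) : ℕ :=
  Nat.card {c : C // hammingNorm (c : Fin n → F) = w}

omit [Fintype F] in
lemma snoc_norm {n : ℕ} (c : Fin n → F) :
    hammingNorm (Fin.snoc c (0:F) : Fin (n+1) → F) = hammingNorm c := by
  simp only [hammingNorm, Finset.card_filter]
  rw [Fin.sum_univ_castSucc]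
  simp [Fin.snoc_castSucc, Fin.snoc_last]

omit [Fintype F] [DecidableEq F] in
lemma key_eq {n : ℕ} (C : Submodule F (Fin n → F)) (u : Fin n → F) :
    ((dualCode (extCode C u) : Set (Fin (n + 1) → F)) =
      {x | ∃ c ∈ dualCode C, ∃ a : F, x = Fin.snoc (c - a • u) a}) := by
  ext x
  constructor
  · intro hx
    set a := x (Fin.last n) with ha
    refine ⟨(fun i => x i.castSucc) + a • u, ?_, a, ?_⟩
    · intro d hd
      have hy : (Fin.snoc d (∑ i, u i * d i) : Fin (n+1) → F) ∈ extCode C u := by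
        constructor
        · simpa [Fin.snoc_castSucc] using hd
        · simp [Fin.snoc_castSucc, Fin.snoc_last]
      have h0 := hx _ hy
      rw [Fin.sum_univ_castSucc] at h0
      simp only [Fin.snoc_castSucc, Fin.snoc_last] at h0
      calc ∑ i : Fin n, ((fun j : Fin n => x j.castSucc) + a • u) i * d i
          = ∑ i, (x i.castSucc * d i + a * (u i * d i)) := by
            apply Finset.sum_congr rfl; intro i _
            simp [Pi.add_apply, Pi.smul_apply, smul_eq_mul]; ring
        _ = ∑ i, x i.castSucc * d i + a * ∑ i, u i * d i := by
            rw [Finset.sum_add_distrib, Finset.mul_sum]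
        _ = 0 := h0
    · funext i
      refine Fin.lastCases ?_ ?_ i
      · simp [Fin.snoc_last, ha]
      · intro j; simp [Fin.snoc_castSucc]
  · rintro ⟨c, hc, a, rfl⟩
    intro y hy
    obtain ⟨hy1, hy2⟩ := hy
    rw [Fin.sum_univ_castSucc]
    simp only [Fin.snoc_castSucc, Fin.snoc_last, Pi.sub_apply, Pi.smul_apply, smul_eq_mul]
    have : ∑ i, (c i - a * u i) * y i.castSucc
        = ∑ i, c i * y i.castSucc - a * ∑ i, u i * y i.castSucc := by
      rw [Finset.mul_sum, ← Finset.sum_sub_distrib]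
      apply Finset.sum_congr rfl; intro i _; ring
    rw [this, hc _ hy1, hy2]
    ring

/-- `(extCode C u)^⊥ = {(c - a·u, a) : c ∈ C^⊥, a ∈ GF(q)}` and
`d((extCode C u)^⊥) ≤ d(C^⊥)`. -/
theorem stmt2 {F : Type*} [Field F] [Fintype F] [DecidableEq F] {n : ℕ}
    (C : Submodule F (Fin n → F)) (u : Fin n → F) (hne : dualCode C ≠ ⊥) :
    ((dualCode (extCode C u) : Set (Fin (n + 1) → F)) =
      {x | ∃ c ∈ dualCode C, ∃ a : F, x = Fin.snoc (c - a • u) a}) ∧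
    minDist (dualCode (extCode C u)) ≤ minDist (dualCode C) := by
  refine ⟨key_eq C u, ?_⟩
  have hnonempty : {w | ∃ c ∈ dualCode C, c ≠ 0 ∧ hammingNorm c = w}.Nonempty := by
    obtain ⟨c, hc, hc0⟩ := Submodule.exists_mem_ne_zero_of_ne_bot hne
    exact ⟨hammingNorm c, c, hc, hc0, rfl⟩
  obtain ⟨c, hc, hc0, hcw⟩ := Nat.sInf_mem hnonempty
  have hmem : (Fin.snoc c (0:F) : Fin (n+1) → F) ∈ dualCode (extCode C u) := by
    have : (Fin.snoc c (0:F) : Fin (n+1) → F) ∈ (dualCode (extCode C u) : Set (Fin (n+1) → F)) := by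
      rw [key_eq C u]; exact ⟨c, hc, 0, by simp⟩
    exact this
  have hne0 : (Fin.snoc c (0:F) : Fin (n+1) → F) ≠ 0 := by
    intro h
    apply hc0
    funext i
    have := congrFun h i.castSucc
    simpa [Fin.snoc_castSucc] using this
  calc minDist (dualCode (extCode C u)) ≤ hammingNorm (Fin.snoc c (0:F) : Fin (n+1) → F) :=
        Nat.sInf_le ⟨_, hmem, hne0, rfl⟩
    _ = hammingNorm c := snoc_norm c
    _ = minDist (dualCode C) := hcw
end

section
/- Let C ⊆ GF(q)^n be a linear code with u ∉ C^⊥, and let C̃^⊥(u) denote the augmented code spanned by C^⊥ and u. Then d(C̄(u)^⊥) = d(C̃^⊥(u)) + 1 if d(C̃^⊥(u)) < d(C^⊥), and d(C̄(u)^⊥) = d(C̃^⊥(u)) if d(C̃^⊥(u)) = d(C^⊥). -/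
open Finset

variable {F : Type*} [Field F] [Fintype F] [DecidableEq F]

set_option linter.unusedSectionVars false

lemma hammingNorm_snoc {n : ℕ} (x : Fin n → F) (c : F) :
    hammingNorm (Fin.snoc x c : Fin (n+1) → F) =
      hammingNorm x + if c = 0 then 0 else 1 := by
  simp only [hammingNorm, Finset.card_filter]
  rw [Fin.sum_univ_castSucc]
  simp [Fin.snoc_castSucc, Fin.snoc_last, ite_not]

lemma minDist_le' {n : ℕ} {C : Submodule F (Fin n → F)} {c : Fin n → F}
    (hc : c ∈ C) (h0 : c ≠ 0) : minDist C ≤ hammingNorm c :=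
  Nat.sInf_le ⟨c, hc, h0, rfl⟩

lemma minDist_exists {n : ℕ} {C : Submodule F (Fin n → F)} {c : Fin n → F}
    (hc : c ∈ C) (h0 : c ≠ 0) :
    ∃ d ∈ C, d ≠ 0 ∧ hammingNorm d = minDist C := by
  have hne : {w | ∃ c ∈ C, c ≠ 0 ∧ hammingNorm c = w}.Nonempty :=
    ⟨hammingNorm c, c, hc, h0, rfl⟩
  exact Nat.sInf_mem hne

lemma mem_dual_ext {n : ℕ} (C : Submodule F (Fin n → F)) (u : Fin n → F)
    (y : Fin (n+1) → F) :
    y ∈ dualCode (extCode C u) ↔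
      (fun i => y i.castSucc + y (Fin.last n) * u i) ∈ dualCode C := by
  constructor
  · intro hy c hc
    have he : (Fin.snoc c (∑ i, u i * c i) : Fin (n+1) → F) ∈ extCode C u := by
      constructor
      · simpa [Fin.snoc_castSucc] using hc
      · simp [Fin.snoc_castSucc, Fin.snoc_last]
    have h2 := hy _ he
    rw [Fin.sum_univ_castSucc] at h2
    simp only [Fin.snoc_castSucc, Fin.snoc_last] at h2
    calc ∑ i, (y i.castSucc + y (Fin.last n) * u i) * c i
        = ∑ i, (y i.castSucc * c i + y (Fin.last n) * (u i * c i)) :=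
          Finset.sum_congr rfl fun i _ => by ring
      _ = ∑ i, y i.castSucc * c i + y (Fin.last n) * ∑ i, u i * c i := by
          rw [Finset.mul_sum, Finset.sum_add_distrib]
      _ = 0 := h2
  · intro h e he
    obtain ⟨hc, hl⟩ := he
    have h2 := h _ hc
    rw [Fin.sum_univ_castSucc, hl]
    calc ∑ i : Fin n, y i.castSucc * e i.castSucc + y (Fin.last n) * ∑ i : Fin n, u i * e i.castSucc
        = ∑ i : Fin n, (y i.castSucc * e i.castSucc + y (Fin.last n) * (u i * e i.castSucc)) := by
          rw [Finset.mul_sum, Finset.sum_add_distrib]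
      _ = ∑ i : Fin n, (y i.castSucc + y (Fin.last n) * u i) * e i.castSucc :=
          Finset.sum_congr rfl fun i _ => by ring
      _ = 0 := h2

/-- relation between the minimum distance of the dual of the extended
code and the minimum distance of the augmented code `C^⊥ + ⟨u⟩`. -/
theorem stmt3 {F : Type*} [Field F] [Fintype F] [DecidableEq F] {n : ℕ}
    (C : Submodule F (Fin n → F)) (u : Fin n → F) (hu : u ∉ dualCode C) :
    (minDist (dualCode C ⊔ Submodule.span F {u}) < minDist (dualCode C) →
      minDist (dualCode (extCode C u)) =
        minDist (dualCode C ⊔ Submodule.span F {u}) + 1) ∧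
    (minDist (dualCode C ⊔ Submodule.span F {u}) = minDist (dualCode C) →
      minDist (dualCode (extCode C u)) =
        minDist (dualCode C ⊔ Submodule.span F {u})) := by
  set D := dualCode C with hD
  set A := dualCode C ⊔ Submodule.span F {u} with hA
  set E := dualCode (extCode C u) with hE
  have huA : u ∈ A := Submodule.mem_sup_right (Submodule.mem_span_singleton_self u)
  have hu0 : u ≠ 0 := fun h => hu (h ▸ D.zero_mem)
  -- decomposition of an arbitrary nonzero element of E
  have decomp : ∀ y ∈ E, y ≠ 0 →
      ∃ x : Fin n → F, ∃ l : F, y = Fin.snoc x l ∧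
        hammingNorm y = hammingNorm x + (if l = 0 then 0 else 1) ∧
        ((l = 0 ∧ x ∈ D ∧ x ≠ 0) ∨ (l ≠ 0 ∧ x ∈ A ∧ x ≠ 0)) := by
    intro y hy hy0
    refine ⟨fun i => y i.castSucc, y (Fin.last n), ?_, ?_, ?_⟩
    · exact (Fin.snoc_init_self y).symm
    · conv_lhs => rw [← Fin.snoc_init_self y]
      exact hammingNorm_snoc _ _
    · have hz : (fun i => y i.castSucc + y (Fin.last n) * u i) ∈ D :=
        (mem_dual_ext C u y).mp hy
      by_cases hl : y (Fin.last n) = 0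
      · left
        refine ⟨hl, ?_, ?_⟩
        · simpa [hl] using hz
        · intro hx0
          apply hy0
          funext i
          refine Fin.lastCases hl (fun i => ?_) i
          exact congrFun hx0 i
      · right
        refine ⟨hl, ?_, ?_⟩
        · have : (fun i => y i.castSucc) =
              (fun i => y i.castSucc + y (Fin.last n) * u i) + (-(y (Fin.last n))) • u := by
            funext i; simp
          rw [this]
          exact A.add_mem (Submodule.mem_sup_left hz)
            (Submodule.mem_sup_right (Submodule.smul_mem _ _ (Submodule.mem_span_singleton_self u)))
        · intro hx0
          apply hu
          have hzu : (fun i => (0:F) + y (Fin.last n) * u i) ∈ D := by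
            have : (fun i => y i.castSucc + y (Fin.last n) * u i)
                 = fun i => (0:F) + y (Fin.last n) * u i := by
              funext i; rw [congrFun hx0 i]; rfl
            rwa [this] at hz
          have : ((y (Fin.last n)) • u) ∈ D := by
            have h' : (fun i => y (Fin.last n) * u i) ∈ D := by simpa using hzu
            exact h'
          have := D.smul_mem (y (Fin.last n))⁻¹ this
          rwa [smul_smul, inv_mul_cancel₀ hl, one_smul] at this
  -- dA ≥ 1 and achieved
  obtain ⟨a, haA, ha0, haw⟩ := minDist_exists huA hu0
  have hdA1 : 1 ≤ minDist A := by
    rw [← haw]; exact Nat.one_le_iff_ne_zero.mpr (fun h => ha0 (hammingNorm_eq_zero.mp h))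
  constructor
  · -- case dA < dD
    intro hlt
    -- a ∉ D
    have haD : a ∉ D := fun h => absurd (haw ▸ minDist_le' h ha0) (not_le.mpr hlt)
    -- write a = d + μ • u
    obtain ⟨d, hd, w, hw, hsum⟩ := Submodule.mem_sup.mp haA
    obtain ⟨μ, rfl⟩ := Submodule.mem_span_singleton.mp hw
    have hμ : μ ≠ 0 := by
      rintro rfl
      refine haD ?_
      rw [← hsum]
      simpa using hd
    -- the codeword snoc a (-μ) ∈ E
    have hyE : (Fin.snoc a (-μ) : Fin (n+1) → F) ∈ E := by
      rw [hE, mem_dual_ext]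
      have : (fun i => (Fin.snoc a (-μ) : Fin (n+1) → F) i.castSucc +
          (Fin.snoc a (-μ) : Fin (n+1) → F) (Fin.last n) * u i) = d := by
        funext i
        simp only [Fin.snoc_castSucc, Fin.snoc_last]
        have := congrFun hsum i
        simp only [Pi.add_apply, Pi.smul_apply, smul_eq_mul] at this
        rw [← this]; ring
      rw [this]; exact hd
    have hy0 : (Fin.snoc a (-μ) : Fin (n+1) → F) ≠ 0 := by
      intro h
      have := congrFun h (Fin.last n)
      simp [Fin.snoc_last] at this
      exact hμ this
    have hyw : hammingNorm (Fin.snoc a (-μ) : Fin (n+1) → F) = minDist A + 1 := by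
      rw [hammingNorm_snoc, haw, if_neg (neg_ne_zero.mpr hμ)]
    apply le_antisymm
    · rw [← hyw]; exact minDist_le' hyE hy0
    · refine le_csInf ⟨hammingNorm (Fin.snoc a (-μ) : Fin (n+1) → F), _, hyE, hy0, rfl⟩ ?_
      rintro w ⟨y, hyE', hy0', rfl⟩
      obtain ⟨x, l, -, hnorm, hcases⟩ := decomp y hyE' hy0'
      rcases hcases with ⟨hl, hxD, hx0⟩ | ⟨hl, hxA, hx0⟩
      · rw [hnorm, if_pos hl, add_zero]
        exact le_trans (Nat.succ_le_of_lt hlt) (minDist_le' hxD hx0)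
      · rw [hnorm, if_neg hl]
        exact Nat.add_le_add_right (minDist_le' hxA hx0) 1
  · -- case dA = dD
    intro heq
    -- D has a minimum-weight word
    have hdD1 : 1 ≤ minDist D := heq ▸ hdA1
    have hDne : ∃ c ∈ D, c ≠ 0 := by
      by_contra h
      push_neg at h
      have : minDist D = 0 := by
        rw [hD, minDist, Nat.sInf_eq_zero]
        right
        ext w
        simp only [Set.mem_setOf_eq, Set.mem_empty_iff_false, iff_false]
        rintro ⟨c, hc, hc0, -⟩
        exact hc0 (h c hc)
      omega
    obtain ⟨c, hcD, hc0⟩ := hDne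
    obtain ⟨x, hxD, hx0, hxw⟩ := minDist_exists hcD hc0
    have hyE : (Fin.snoc x 0 : Fin (n+1) → F) ∈ E := by
      rw [hE, mem_dual_ext]
      have : (fun i => (Fin.snoc x (0:F) : Fin (n+1) → F) i.castSucc +
          (Fin.snoc x (0:F) : Fin (n+1) → F) (Fin.last n) * u i) = x := by
        funext i; simp [Fin.snoc_castSucc, Fin.snoc_last]
      rw [this]; exact hxD
    have hy0 : (Fin.snoc x (0:F) : Fin (n+1) → F) ≠ 0 := by
      intro h
      apply hx0
      funext i
      have := congrFun h i.castSucc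
      simpa [Fin.snoc_castSucc] using this
    have hyw : hammingNorm (Fin.snoc x (0:F) : Fin (n+1) → F) = minDist A := by
      rw [hammingNorm_snoc, hxw, if_pos rfl, add_zero, heq]
    apply le_antisymm
    · rw [← hyw]; exact minDist_le' hyE hy0
    · refine le_csInf ⟨hammingNorm (Fin.snoc x (0:F) : Fin (n+1) → F), _, hyE, hy0, rfl⟩ ?_
      rintro w ⟨y, hyE', hy0', rfl⟩
      obtain ⟨x', l, -, hnorm, hcases⟩ := decomp y hyE' hy0'
      rcases hcases with ⟨hl, hxD', hx0'⟩ | ⟨hl, hxA', hx0'⟩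
      · rw [hnorm, if_pos hl, add_zero, heq]
        exact minDist_le' hxD' hx0'
      · rw [hnorm, if_neg hl]
        exact le_trans (minDist_le' hxA' hx0') (Nat.le_succ _)
end

section
/- Let q > 2 be a prime power, α a primitive element of GF(q), and 2 ≤ d ≤ q-2. Let C be the cyclic code of length q-1 over GF(q) with generator polynomial ∏_{i=0}^{d-2}(x - α^i), and let u = (1, α^{d-1}, α^{2(d-1)}, ..., α^{(q-2)(d-1)}). Then the extended code C̄(u) is a [q, q-d, d+1] MDS code over GF(q) and its dual C̄(u)^⊥ is a [q, d, q-d+1] MDS code over GF(q). -/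
open Finset

variable {F : Type*} [Field F] [Fintype F] [DecidableEq F]

set_option linter.unusedSectionVars false
set_option maxHeartbeats 1000000

open Polynomial

section Helpers
variable {F : Type*} [Field F] [Fintype F] [DecidableEq F]
variable {q : ℕ} {α : F}

/-! ### Duality machinery -/

private def dotForm (N : ℕ) : LinearMap.BilinForm F (Fin N → F) :=
  LinearMap.mk₂ F (fun x y => ∑ i, x i * y i)
    (fun x x' y => by simp [add_mul, Finset.sum_add_distrib])
    (fun a x y => by simp [Finset.mul_sum, mul_assoc])
    (fun x y y' => by simp [mul_add, Finset.sum_add_distrib])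
    (fun a x y => by simp [Finset.mul_sum, mul_left_comm])

private lemma dotForm_refl (N : ℕ) : (dotForm (F := F) N).IsRefl := by
  intro x y h
  simpa [dotForm, LinearMap.mk₂_apply, mul_comm] using h

private lemma dotForm_nondeg (N : ℕ) : (dotForm (F := F) N).Nondegenerate := by
  refine (LinearMap.IsRefl.nondegenerate_iff_separatingLeft (B := dotForm (F := F) N) (dotForm_refl N)).mpr ?_
  intro x hx
  funext i
  have := hx (Pi.single i 1)
  simpa [dotForm, LinearMap.mk₂_apply, Pi.single_apply, mul_ite, Finset.sum_ite_eq'] using this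

private lemma dualCode_eq_orth {N : ℕ} (D : Submodule F (Fin N → F)) :
    dualCode D = (dotForm (F := F) N).orthogonal D := by
  ext x
  constructor
  · intro hx c hc
    have := hx c hc
    simpa [dotForm, LinearMap.BilinForm.IsOrtho, LinearMap.mk₂_apply, mul_comm] using this
  · intro hx c hc
    have := hx c hc
    simpa [dotForm, LinearMap.BilinForm.IsOrtho, LinearMap.mk₂_apply, mul_comm] using this

private lemma finrank_dualCode {N : ℕ} (D : Submodule F (Fin N → F)) :
    Module.finrank F (dualCode D) = N - Module.finrank F D := by
  rw [dualCode_eq_orth,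
    LinearMap.BilinForm.finrank_orthogonal (dotForm_nondeg N)]
  simp

private lemma dualCode_dualCode {N : ℕ} (D : Submodule F (Fin N → F)) :
    dualCode (dualCode D) = D := by
  rw [dualCode_eq_orth, dualCode_eq_orth,
    LinearMap.BilinForm.orthogonal_orthogonal (dotForm_nondeg N) (dotForm_refl N)]

private lemma dualCode_antitone {N : ℕ} {D E : Submodule F (Fin N → F)} (h : D ≤ E) :
    dualCode E ≤ dualCode D := fun x hx c hc => hx c (h hc)

private lemma le_dualCode_dualCode {N : ℕ} (D : Submodule F (Fin N → F)) :
    D ≤ dualCode (dualCode D) := by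
  intro x hx c hc
  rw [Finset.sum_congr rfl fun i _ => mul_comm (x i) (c i)]
  exact hc x hx

/-! ### Character sums for a primitive root -/

private lemma cast_qsub1 (hF : Fintype.card F = q) (hq : 2 < q) :
    ((q - 1 : ℕ) : F) = -1 := by
  have h0 : ((q : ℕ) : F) = 0 := by
    rw [← hF]; exact FiniteField.cast_card_eq_zero F
  rw [Nat.cast_sub (by omega : 1 ≤ q), h0, Nat.cast_one, zero_sub]

private lemma sum_pow_prim (hF : Fintype.card F = q) (hq : 2 < q)
    (hα : IsPrimitiveRoot α (q - 1)) (m : ℕ) :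
    ∑ j : Fin (q - 1), (α ^ m) ^ (j : ℕ) = if (q - 1) ∣ m then -1 else 0 := by
  by_cases h : (q - 1) ∣ m
  · have h1 : α ^ m = 1 := (hα.pow_eq_one_iff_dvd m).mpr h
    simp [h1, h, Fintype.card_fin, cast_qsub1 hF hq]
  · have hb1 : α ^ m ≠ 1 := fun h' => h ((hα.pow_eq_one_iff_dvd m).mp h')
    have hpow : (α ^ m) ^ (q - 1) = 1 := by
      rw [← pow_mul, mul_comm, pow_mul, hα.pow_eq_one, one_pow]
    rw [if_neg h, Fin.sum_univ_eq_sum_range]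
    have hgeom := geom_sum_mul (α ^ m) (q - 1)
    rw [hpow, sub_self] at hgeom
    rcases mul_eq_zero.mp hgeom with h' | h'
    · exact h'
    · exact absurd (sub_eq_zero.mp h') hb1

private lemma sum_eval_prim (hF : Fintype.card F = q) (hq : 2 < q)
    (hα : IsPrimitiveRoot α (q - 1)) {p : F[X]} (hp : p.natDegree ≤ q - 1) :
    ∑ j : Fin (q - 1), p.eval (α ^ (j : ℕ)) = -(p.coeff 0) - p.coeff (q - 1) := by
  have hdeg : p.natDegree < q := by omega
  calc ∑ j : Fin (q - 1), p.eval (α ^ (j : ℕ))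
      = ∑ j : Fin (q - 1), ∑ i ∈ range q, p.coeff i * ((α ^ i) ^ (j : ℕ)) := by
        refine Finset.sum_congr rfl fun j _ => ?_
        rw [eval_eq_sum_range' hdeg]
        refine Finset.sum_congr rfl fun i _ => ?_
        rw [pow_right_comm]
    _ = ∑ i ∈ range q, p.coeff i * ∑ j : Fin (q - 1), (α ^ i) ^ (j : ℕ) := by
        rw [Finset.sum_comm]
        exact Finset.sum_congr rfl fun i _ => by rw [Finset.mul_sum]
    _ = ∑ i ∈ range q, p.coeff i * (if (q - 1) ∣ i then -1 else 0) := by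
        refine Finset.sum_congr rfl fun i _ => ?_
        rw [sum_pow_prim hF hq hα]
    _ = ∑ i ∈ ({0, q - 1} : Finset ℕ), p.coeff i * (if (q - 1) ∣ i then -1 else 0) := by
        refine (Finset.sum_subset ?_ ?_).symm
        · intro i hi
          simp only [Finset.mem_insert, Finset.mem_singleton] at hi
          rcases hi with rfl | rfl <;> simp [Finset.mem_range] <;> omega
        · intro i hi hni
          simp only [Finset.mem_insert, Finset.mem_singleton, not_or] at hni
          rw [if_neg, mul_zero]
          intro hdvd
          rcases hni with ⟨h0, h1⟩
          have := Nat.le_of_dvd (Nat.pos_of_ne_zero h0) hdvd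
          simp only [Finset.mem_range] at hi
          omega
    _ = -(p.coeff 0) - p.coeff (q - 1) := by
        rw [Finset.sum_pair (by omega : (0 : ℕ) ≠ q - 1)]
        rw [if_pos (dvd_zero _), if_pos dvd_rfl]
        ring

/-! ### The evaluation codes -/

private noncomputable def evalMap (α : F) (q r m : ℕ) : F[X] →ₗ[F] (Fin (q - 1 + 1) → F) where
  toFun g := fun i =>
    if (i : ℕ) < q - 1 then α ^ ((i : ℕ) * r) * g.eval (α ^ (i : ℕ)) else -(g.coeff (m - 1))
  map_add' g h := by
    funext i; by_cases hi : (i : ℕ) < q - 1 <;> simp [hi, mul_add] <;> ring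
  map_smul' a g := by
    funext i; by_cases hi : (i : ℕ) < q - 1 <;> simp [hi] <;> ring

private lemma evalMap_castSucc (r m : ℕ) (g : F[X]) (j : Fin (q - 1)) :
    evalMap α q r m g (Fin.castSucc j) = α ^ ((j : ℕ) * r) * g.eval (α ^ (j : ℕ)) := by
  simp [evalMap, j.isLt]

private lemma evalMap_last (r m : ℕ) (g : F[X]) :
    evalMap α q r m g (Fin.last (q - 1)) = -(g.coeff (m - 1)) := by
  simp [evalMap]

private noncomputable def Ecode (α : F) (q r m : ℕ) : Submodule F (Fin (q - 1 + 1) → F) :=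
  (Polynomial.degreeLT F m).map (evalMap α q r m)

private lemma mem_Ecode {r m : ℕ} {x : Fin (q - 1 + 1) → F} :
    x ∈ Ecode α q r m ↔ ∃ g ∈ Polynomial.degreeLT F m, evalMap α q r m g = x := by
  simp [Ecode, Submodule.mem_map]

private lemma natDegree_lt_of_mem_degreeLT (hq : 2 < q) {m : ℕ} (hm : m ≤ q - 2)
    {g : F[X]} (hg : g ∈ Polynomial.degreeLT F m) : g.natDegree < q - 1 := by
  by_cases hg0 : g = 0
  · simp [hg0]; omega
  · have := Polynomial.mem_degreeLT.mp hg
    have h2 := (Polynomial.natDegree_lt_iff_degree_lt hg0).mpr this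
    omega

private lemma eval_zero_poly_eq_zero (hq : 2 < q) (hα : IsPrimitiveRoot α (q - 1))
    {m : ℕ} (hm : m ≤ q - 2) {g : F[X]} (hg : g ∈ Polynomial.degreeLT F m)
    (h0 : ∀ j : Fin (q - 1), g.eval (α ^ (j : ℕ)) = 0) : g = 0 := by
  refine Polynomial.eq_zero_of_natDegree_lt_card_of_eval_eq_zero g
    (f := fun j : Fin (q - 1) => α ^ (j : ℕ)) ?_ h0 ?_
  · intro i j hij
    exact Fin.ext (hα.pow_inj i.isLt j.isLt hij)
  · rw [Fintype.card_fin]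
    exact natDegree_lt_of_mem_degreeLT hq hm hg

private lemma finrank_Ecode (hq : 2 < q) (hα : IsPrimitiveRoot α (q - 1))
    {r m : ℕ} (hm : m ≤ q - 2) :
    Module.finrank F (Ecode α q r m) = m := by
  have hα0 : α ≠ 0 := fun h => by
    have := hα.pow_eq_one; rw [h] at this
    simp [zero_pow (by omega : q - 1 ≠ 0)] at this
  have hrange : Ecode α q r m =
      LinearMap.range ((evalMap α q r m).comp (Polynomial.degreeLT F m).subtype) := by
    rw [LinearMap.range_comp, Submodule.range_subtype]; rfl
  rw [hrange, LinearMap.finrank_range_of_inj, (Polynomial.degreeLTEquiv F m).finrank_eq,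
    Module.finrank_fin_fun]
  rw [injective_iff_map_eq_zero]
  rintro ⟨g, hg⟩ hg0
  have hev : ∀ j : Fin (q - 1), g.eval (α ^ (j : ℕ)) = 0 := by
    intro j
    have := congrFun hg0 (Fin.castSucc j)
    rw [LinearMap.comp_apply, Submodule.subtype_apply] at this
    simp only [evalMap_castSucc, Pi.zero_apply] at this
    exact (mul_eq_zero.mp this).resolve_left (pow_ne_zero _ hα0)
  exact Subtype.ext (eval_zero_poly_eq_zero hq hα hm hg hev)

private lemma hammingNorm_split {N : ℕ} (x : Fin (N + 1) → F) :
    hammingNorm x = #(univ.filter fun j : Fin N => x (Fin.castSucc j) ≠ 0) +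
      (if x (Fin.last N) ≠ 0 then 1 else 0) := by
  unfold hammingNorm
  rw [Finset.card_filter, Finset.card_filter, Fin.sum_univ_castSucc]

private lemma hammingNorm_Ecode_ge (hq : 2 < q) (hα : IsPrimitiveRoot α (q - 1))
    {r m : ℕ} (hm1 : 1 ≤ m) (hm : m ≤ q - 2)
    {x : Fin (q - 1 + 1) → F} (hx : x ∈ Ecode α q r m) (hx0 : x ≠ 0) :
    q - m + 1 ≤ hammingNorm x := by
  have hα0 : α ≠ 0 := fun h => by
    have := hα.pow_eq_one; rw [h] at this
    simp [zero_pow (by omega : q - 1 ≠ 0)] at this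
  obtain ⟨g, hg, rfl⟩ := mem_Ecode.mp hx
  have hg0 : g ≠ 0 := fun h => hx0 (by rw [h, map_zero])
  set Z : Finset (Fin (q - 1)) := univ.filter fun j => g.eval (α ^ (j : ℕ)) = 0 with hZ
  have hZcard : #Z ≤ g.natDegree := by
    have himg : #(Z.image fun j : Fin (q - 1) => α ^ (j : ℕ)) = #Z :=
      Finset.card_image_of_injOn fun i _ j _ hij => Fin.ext (hα.pow_inj i.isLt j.isLt hij)
    rw [← himg]
    refine Polynomial.card_le_degree_of_subset_roots ?_
    intro z hz
    rw [Finset.mem_val, Finset.mem_image] at hz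
    obtain ⟨j, hj, rfl⟩ := hz
    rw [hZ, Finset.mem_filter] at hj
    exact (Polynomial.mem_roots hg0).mpr hj.2
  have hdeg : g.natDegree ≤ m - 1 := by
    have := (Polynomial.natDegree_lt_iff_degree_lt hg0).mpr (Polynomial.mem_degreeLT.mp hg)
    omega
  have hsplit := hammingNorm_split (evalMap α q r m g)
  have hfilter : (univ.filter fun j : Fin (q - 1) =>
      evalMap α q r m g (Fin.castSucc j) ≠ 0) = univ \ Z := by
    ext j
    simp only [Finset.mem_filter, Finset.mem_sdiff, Finset.mem_univ, true_and, hZ,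
      evalMap_castSucc]
    simp [pow_ne_zero _ hα0]
  have hcard : #(univ \ Z) = (q - 1) - #Z := by
    rw [Finset.card_sdiff_of_subset (Finset.subset_univ _), Finset.card_univ, Fintype.card_fin]
  rw [hsplit, hfilter, hcard, evalMap_last]
  by_cases hc : g.coeff (m - 1) = 0
  · have hne : g.natDegree ≠ m - 1 := fun h => by
      have := Polynomial.leadingCoeff_ne_zero.mpr hg0
      rw [Polynomial.leadingCoeff, h] at this
      exact this hc
    have h2 : #Z ≤ m - 2 := le_trans hZcard (by omega)
    refine le_trans ?_ (Nat.le_add_right _ _)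
    omega
  · rw [if_pos (by simpa using hc)]
    have h2 : #Z ≤ m - 1 := le_trans hZcard hdeg
    omega

private lemma exists_Ecode_weight (hq : 2 < q) (hα : IsPrimitiveRoot α (q - 1))
    {r m : ℕ} (hm1 : 1 ≤ m) (hm : m ≤ q - 2) :
    ∃ x ∈ Ecode α q r m, x ≠ 0 ∧ hammingNorm x = q - m + 1 := by
  set g : F[X] := ∏ i ∈ Finset.range (m - 1), (X - C (α ^ i)) with hgdef
  have hmonic : g.Monic := monic_prod_of_monic _ _ fun i _ => monic_X_sub_C _
  have hdeg : g.natDegree = m - 1 := by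
    rw [hgdef, Polynomial.natDegree_prod _ _ fun i _ => Polynomial.X_sub_C_ne_zero _]
    simp only [Polynomial.natDegree_X_sub_C]
    rw [Finset.sum_const, smul_eq_mul, mul_one, Finset.card_range]
  have hgmem : g ∈ Polynomial.degreeLT F m := by
    rw [Polynomial.mem_degreeLT, Polynomial.degree_eq_natDegree hmonic.ne_zero, hdeg]
    exact_mod_cast (by omega : m - 1 < m)
  have hcoeff : g.coeff (m - 1) = 1 := by
    rw [← hdeg]; exact hmonic.coeff_natDegree
  have heval : ∀ j : Fin (q - 1), g.eval (α ^ (j : ℕ)) = 0 ↔ (j : ℕ) < m - 1 := by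
    intro j
    rw [hgdef, Polynomial.eval_prod]
    rw [Finset.prod_eq_zero_iff]
    constructor
    · rintro ⟨i, hi, hzero⟩
      rw [Finset.mem_range] at hi
      simp only [Polynomial.eval_sub, Polynomial.eval_X, Polynomial.eval_C, sub_eq_zero] at hzero
      have : (j : ℕ) = i := hα.pow_inj j.isLt (by omega) hzero
      omega
    · intro hj
      refine ⟨(j : ℕ), Finset.mem_range.mpr hj, ?_⟩
      simp
  refine ⟨evalMap α q r m g, Submodule.mem_map_of_mem hgmem, ?_, ?_⟩
  · intro h
    have := congrFun h (Fin.last (q - 1))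
    rw [evalMap_last, hcoeff] at this
    simp at this
  · rw [hammingNorm_split, evalMap_last, hcoeff]
    have hα0 : α ≠ 0 := fun h => by
      have := hα.pow_eq_one; rw [h] at this
      simp [zero_pow (by omega : q - 1 ≠ 0)] at this
    have hfilter : (univ.filter fun j : Fin (q - 1) =>
        evalMap α q r m g (Fin.castSucc j) ≠ 0) =
        univ \ Finset.Iio (⟨m - 1, by omega⟩ : Fin (q - 1)) := by
      ext j
      simp only [Finset.mem_filter, Finset.mem_sdiff, Finset.mem_univ, true_and,
        Finset.mem_Iio, Fin.lt_def, evalMap_castSucc]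
      simp [pow_ne_zero _ hα0, heval j]
    rw [hfilter, Finset.card_sdiff_of_subset (Finset.subset_univ _), Finset.card_univ,
      Fintype.card_fin, Fin.card_Iio]
    simp only [Fin.val_mk, ne_eq, neg_ne_zero, one_ne_zero, not_false_eq_true, if_true]
    omega

private lemma minDist_Ecode (hq : 2 < q) (hα : IsPrimitiveRoot α (q - 1))
    {r m : ℕ} (hm1 : 1 ≤ m) (hm : m ≤ q - 2) :
    minDist (Ecode α q r m) = q - m + 1 := by
  obtain ⟨x, hx, hx0, hw⟩ := exists_Ecode_weight hq hα hm1 hm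
  refine le_antisymm (Nat.sInf_le ⟨x, hx, hx0, hw⟩) ?_
  refine le_csInf ⟨_, x, hx, hx0, hw⟩ ?_
  rintro w ⟨c, hc, hc0, rfl⟩
  exact hammingNorm_Ecode_ge hq hα hm1 hm hc hc0


private lemma Ecode_le_extCode (hF : Fintype.card F = q) (hq : 2 < q)
    (hα : IsPrimitiveRoot α (q - 1))
    {d : ℕ} (hd2 : 2 ≤ d) (hdq : d ≤ q - 2)
    {C : Submodule F (Fin (q - 1) → F)}
    (hC : ∀ c, c ∈ C ↔ ∀ i < d - 1, ∑ j, c j * (α ^ i) ^ (j : ℕ) = 0)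
    {u : Fin (q - 1) → F} (hu : ∀ j, u j = α ^ ((j : ℕ) * (d - 1))) :
    Ecode α q 1 (q - d) ≤ extCode C u := by
  intro x hx
  obtain ⟨g, hg, rfl⟩ := mem_Ecode.mp hx
  have hnd : g.natDegree ≤ q - d - 1 := by
    by_cases hg0 : g = 0
    · simp [hg0]
    · have := (Polynomial.natDegree_lt_iff_degree_lt hg0).mpr (Polynomial.mem_degreeLT.mp hg)
      omega
  refine ⟨?_, ?_⟩
  · rw [hC]
    intro i hi
    have hterm : ∀ j : Fin (q - 1),
        evalMap α q 1 (q - d) g (Fin.castSucc j) * (α ^ i) ^ (j : ℕ) =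
        (X ^ (i + 1) * g).eval (α ^ (j : ℕ)) := by
      intro j
      rw [evalMap_castSucc, Polynomial.eval_mul, Polynomial.eval_pow, Polynomial.eval_X,
        pow_right_comm α i (j : ℕ), Nat.mul_one, pow_succ]
      ring
    rw [Finset.sum_congr rfl fun j _ => hterm j]
    rw [sum_eval_prim hF hq hα (by
      refine le_trans (Polynomial.natDegree_mul_le) ?_
      rw [Polynomial.natDegree_X_pow]
      omega)]
    rw [Polynomial.coeff_X_pow_mul', Polynomial.coeff_X_pow_mul']
    rw [if_neg (by omega), if_pos (by omega : i + 1 ≤ q - 1),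
      Polynomial.coeff_eq_zero_of_natDegree_lt (by omega : g.natDegree < q - 1 - (i + 1))]
    simp
  · rw [evalMap_last]
    have hterm2 : ∀ j : Fin (q - 1),
        u j * evalMap α q 1 (q - d) g (Fin.castSucc j) =
        (X ^ d * g).eval (α ^ (j : ℕ)) := by
      intro j
      rw [hu j, evalMap_castSucc, Polynomial.eval_mul, Polynomial.eval_pow, Polynomial.eval_X,
        Nat.mul_one, ← pow_mul α (j : ℕ) d, ← mul_assoc, ← pow_add]
      congr 2
      rw [← Nat.mul_succ]
      congr 1
      omega
    rw [Finset.sum_congr rfl fun j _ => hterm2 j]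
    rw [sum_eval_prim hF hq hα (by
      refine le_trans (Polynomial.natDegree_mul_le) ?_
      rw [Polynomial.natDegree_X_pow]
      omega)]
    rw [Polynomial.coeff_X_pow_mul', Polynomial.coeff_X_pow_mul']
    rw [if_neg (by omega), if_pos (by omega : d ≤ q - 1)]
    rw [show q - 1 - d = q - d - 1 from by omega]
    ring

private lemma Ecode_le_dualCode_extCode (hF : Fintype.card F = q) (hq : 2 < q)
    (hα : IsPrimitiveRoot α (q - 1))
    {d : ℕ} (hd2 : 2 ≤ d) (hdq : d ≤ q - 2)
    {C : Submodule F (Fin (q - 1) → F)}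
    (hC : ∀ c, c ∈ C ↔ ∀ i < d - 1, ∑ j, c j * (α ^ i) ^ (j : ℕ) = 0)
    {u : Fin (q - 1) → F} (hu : ∀ j, u j = α ^ ((j : ℕ) * (d - 1))) :
    Ecode α q 0 d ≤ dualCode (extCode C u) := by
  intro y hy
  obtain ⟨h, hh, rfl⟩ := mem_Ecode.mp hy
  intro c hc
  obtain ⟨hcC, hclast⟩ := hc
  have hnd : h.natDegree < d := by
    by_cases h0 : h = 0
    · simp [h0]; omega
    · exact (Polynomial.natDegree_lt_iff_degree_lt h0).mpr (Polynomial.mem_degreeLT.mp hh)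
  rw [Fin.sum_univ_castSucc, evalMap_last]
  have hstep : ∑ j : Fin (q - 1),
      evalMap α q 0 d h (Fin.castSucc j) * c (Fin.castSucc j) =
      ∑ k ∈ range d, h.coeff k *
        ∑ j : Fin (q - 1), c (Fin.castSucc j) * (α ^ k) ^ (j : ℕ) := by
    have h1 : ∀ j : Fin (q - 1),
        evalMap α q 0 d h (Fin.castSucc j) * c (Fin.castSucc j) =
        ∑ k ∈ range d, h.coeff k * (c (Fin.castSucc j) * (α ^ k) ^ (j : ℕ)) := by
      intro j
      rw [evalMap_castSucc, Nat.mul_zero, pow_zero, one_mul, eval_eq_sum_range' hnd,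
        Finset.sum_mul]
      refine Finset.sum_congr rfl fun k _ => ?_
      rw [pow_right_comm]
      ring
    rw [Finset.sum_congr rfl fun j _ => h1 j, Finset.sum_comm]
    exact Finset.sum_congr rfl fun k _ => by rw [Finset.mul_sum]
  rw [hstep]
  rw [show d = d - 1 + 1 from by omega, Finset.sum_range_succ]
  have hzero : ∀ k ∈ range (d - 1),
      h.coeff k * ∑ j : Fin (q - 1), c (Fin.castSucc j) * (α ^ k) ^ (j : ℕ) = 0 := by
    intro k hk
    rw [(hC _).mp hcC k (Finset.mem_range.mp hk), mul_zero]
  rw [Finset.sum_eq_zero hzero, zero_add]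
  have hTd : ∑ j : Fin (q - 1), c (Fin.castSucc j) * (α ^ (d - 1)) ^ (j : ℕ) =
      c (Fin.last (q - 1)) := by
    rw [hclast]
    refine Finset.sum_congr rfl fun j _ => ?_
    rw [hu j, ← pow_mul, Nat.mul_comm (d - 1) (j : ℕ), mul_comm]
  rw [hTd]
  have : d - 1 + 1 - 1 = d - 1 := by omega
  rw [this]
  ring

end Helpers

/-- extending the cyclic Reed–Solomon code of length `q-1` with zeros
`α^0,…,α^{d-2}` by `u = (α^{j(d-1)})_j` gives a `[q, q-d, d+1]` MDS code whose dual
is a `[q, d, q-d+1]` MDS code. -/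
theorem stmt5 {F : Type*} [Field F] [Fintype F] [DecidableEq F] (q : ℕ)
    (hF : Fintype.card F = q) (hq : 2 < q)
    (α : F) (hα : IsPrimitiveRoot α (q - 1))
    (d : ℕ) (hd2 : 2 ≤ d) (hdq : d ≤ q - 2)
    (C : Submodule F (Fin (q - 1) → F))
    (hC : ∀ c, c ∈ C ↔ ∀ i < d - 1, ∑ j, c j * (α ^ i) ^ (j : ℕ) = 0)
    (u : Fin (q - 1) → F) (hu : ∀ j, u j = α ^ ((j : ℕ) * (d - 1))) :
    Module.finrank F (extCode C u) = q - d ∧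
    minDist (extCode C u) = d + 1 ∧
    Module.finrank F (dualCode (extCode C u)) = d ∧
    minDist (dualCode (extCode C u)) = q - d + 1 := by
    classical
  have hA_le := Ecode_le_extCode hF hq hα hd2 hdq hC hu
  have hB_le := Ecode_le_dualCode_extCode hF hq hα hd2 hdq hC hu
  have hfrA : Module.finrank F (Ecode α q 1 (q - d)) = q - d := finrank_Ecode hq hα (by omega)
  have hfrB : Module.finrank F (Ecode α q 0 d) = d := finrank_Ecode hq hα hdq
  have hext_le : extCode C u ≤ dualCode (Ecode α q 0 d) :=
    le_trans (le_dualCode_dualCode _) (dualCode_antitone hB_le)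
  have hfr_dualB : Module.finrank F (dualCode (Ecode α q 0 d)) = q - d := by
    rw [finrank_dualCode, hfrB]; omega
  have hAeq : Ecode α q 1 (q - d) = extCode C u := by
    refine Submodule.eq_of_le_of_finrank_le hA_le ?_
    calc Module.finrank F (extCode C u)
        ≤ Module.finrank F (dualCode (Ecode α q 0 d)) := Submodule.finrank_mono hext_le
      _ = q - d := hfr_dualB
      _ = Module.finrank F (Ecode α q 1 (q - d)) := hfrA.symm
  have hExt_eq_dualB : extCode C u = dualCode (Ecode α q 0 d) := by
    refine Submodule.eq_of_le_of_finrank_le hext_le ?_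
    rw [hfr_dualB, ← hAeq, hfrA]
  have hdual_eq : dualCode (extCode C u) = Ecode α q 0 d := by
    rw [hExt_eq_dualB, dualCode_dualCode]
  refine ⟨?_, ?_, ?_, ?_⟩
  · rw [← hAeq, hfrA]
  · rw [← hAeq]
    have hmd := minDist_Ecode (r := 1) (m := q - d) hq hα (by omega) (by omega)
    rw [hmd]
    omega
  · rw [hdual_eq, hfrB]
  · rw [hdual_eq]
    exact minDist_Ecode hq hα (by omega) hdq
end

section
/- Let q > 2 be a prime power, m ≥ 2, λ a divisor of q-1, n = λ(q^m - 1)/(q - 1), and suppose gcd(mλ, q-1) > 1. Let α ∈ GF(q^m) be a primitive n-th root of unity and C the cyclic code of length n over GF(q) with generator polynomial the minimal polynomial of α over GF(q). Then the standardly extended code C̄(-1) has parameters [n+1, n-m, 3]. -/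
open Finset

variable {F : Type*} [Field F] [Fintype F] [DecidableEq F]

/- ===== auxiliary lemmas added for the proof of stmt8 ===== -/

lemma mem_extCode {n : ℕ} (C : Submodule F (Fin n → F)) (u : Fin n → F)
    (x : Fin (n + 1) → F) :
    x ∈ extCode C u ↔ (fun i => x i.castSucc) ∈ C ∧
      x (Fin.last n) = ∑ i, u i * x i.castSucc := Iff.rfl

/-- The extended code is linearly equivalent to the original code. -/
noncomputable def extEquiv {n : ℕ} (C : Submodule F (Fin n → F)) (u : Fin n → F) :
    (extCode C u) ≃ₗ[F] C where
  toFun x := ⟨fun j => x.1 j.castSucc, x.2.1⟩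
  map_add' x y := rfl
  map_smul' a x := rfl
  invFun c := ⟨Fin.snoc c.1 (∑ i, u i * c.1 i), by
    have h1 : (fun j : Fin n =>
        (Fin.snoc c.1 (∑ i, u i * c.1 i) : Fin (n + 1) → F) j.castSucc) = c.1 := by
      funext j; simp
    refine (mem_extCode C u _).mpr ⟨?_, ?_⟩
    · rw [h1]; exact c.2
    · rw [Fin.snoc_last]
      congr 1
      funext i
      rw [show (Fin.snoc c.1 (∑ i, u i * c.1 i) : Fin (n + 1) → F) i.castSucc = c.1 i
        from Fin.snoc_castSucc ..]⟩
  left_inv x := by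
    apply Subtype.ext
    show (Fin.snoc (fun j : Fin n => x.1 j.castSucc)
        (∑ i, u i * x.1 i.castSucc) : Fin (n + 1) → F) = x.1
    funext i
    refine Fin.lastCases ?_ (fun j => ?_) i
    · rw [Fin.snoc_last]
      exact (((mem_extCode C u x.1).mp x.2).2).symm
    · rw [Fin.snoc_castSucc]
  right_inv c := by
    apply Subtype.ext
    show (fun j : Fin n => (Fin.snoc c.1 (∑ i, u i * c.1 i) : Fin (n + 1) → F) j.castSucc) = c.1
    funext j
    exact Fin.snoc_castSucc ..

lemma exists_algebraMap_eq {F K : Type*} [Field F] [Fintype F] [Field K] [Fintype K]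
    [Algebra F K] (β : K) (hβ : β ^ (Fintype.card F) = β) :
    ∃ b : F, algebraMap F K b = β := by
  classical
  by_contra h
  push_neg at h
  set qq := Fintype.card F with hqq
  have hq2 : 1 < qq := Fintype.one_lt_card
  set P : Polynomial K := Polynomial.X ^ qq - Polynomial.X with hP
  have hdeg : P.natDegree = qq := by
    rw [hP, Polynomial.natDegree_sub_eq_left_of_natDegree_lt, Polynomial.natDegree_X_pow]
    simpa [Polynomial.natDegree_X_pow, Polynomial.natDegree_X] using hq2
  have hP0 : P ≠ 0 := by
    intro h0
    rw [h0, Polynomial.natDegree_zero] at hdeg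
    omega
  have hroot : ∀ y : K, y ^ qq = y → y ∈ P.roots.toFinset := by
    intro y hy
    rw [Multiset.mem_toFinset, Polynomial.mem_roots hP0]
    simp [Polynomial.IsRoot, hP, sub_eq_zero, hy]
  set S : Finset K := Finset.univ.image (algebraMap F K) with hS
  have hcardS : S.card = qq := by
    rw [hS, Finset.card_image_of_injective _ (algebraMap F K).injective, Finset.card_univ]
  have hβS : β ∉ S := by
    simp only [hS, Finset.mem_image]
    rintro ⟨b, -, hb⟩
    exact h b hb
  have hsub : insert β S ⊆ P.roots.toFinset := by
    intro y hy
    rcases Finset.mem_insert.mp hy with rfl | hy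
    · exact hroot y hβ
    · rcases Finset.mem_image.mp hy with ⟨b, -, rfl⟩
      refine hroot _ ?_
      rw [← map_pow, FiniteField.pow_card]
  have hbad : qq + 1 ≤ qq := by
    calc qq + 1 = (insert β S).card := by
          rw [Finset.card_insert_of_notMem hβS, hcardS]
    _ ≤ P.roots.toFinset.card := Finset.card_le_card hsub
    _ ≤ Multiset.card P.roots := P.roots.toFinset_card_le
    _ ≤ P.natDegree := P.card_roots'
    _ = qq := hdeg
  omega

lemma aux_arith {q m d n : ℕ} (hq : 3 ≤ q) (hm : 2 ≤ m) (hd : d ≤ m - 1)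
    (h1 : n ≤ q ^ d - 1) (h2 : q ^ m - 1 ≤ n * (q - 1)) : False := by
  have hA3 : 3 ≤ q ^ (m - 1) := le_trans hq (Nat.le_self_pow (by omega) q)
  have hdm : q ^ d ≤ q ^ (m - 1) := Nat.pow_le_pow_right (by omega) hd
  have hqm : q ^ m = q ^ (m - 1) * q := by
    conv_lhs => rw [show m = (m - 1) + 1 by omega]
    rw [pow_succ]
  rw [hqm] at h2
  have h4 : n * (q - 1) ≤ (q ^ (m - 1) - 1) * (q - 1) :=
    Nat.mul_le_mul_right _ (by omega)
  have key : q ^ (m - 1) * q - 1 ≤ (q ^ (m - 1) - 1) * (q - 1) := le_trans h2 h4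
  obtain ⟨a, ha⟩ : ∃ a, q ^ (m - 1) = a + 3 := ⟨q ^ (m - 1) - 3, by omega⟩
  obtain ⟨b, hb⟩ : ∃ b, q = b + 3 := ⟨q - 3, by omega⟩
  rw [ha, hb] at key
  rw [show (a + 3) * (b + 3) = a * b + 3 * a + 3 * b + 9 by ring] at key
  rw [show (a + 3 - 1) * (b + 3 - 1) = a * b + 2 * a + 2 * b + 4 by
    simp only [show a + 3 - 1 = a + 2 by omega, show b + 3 - 1 = b + 2 by omega]; ring] at key
  generalize a * b = t at key
  omega

lemma sum_eq_pair {M : Type*} [AddCommMonoid M] {n : ℕ} {a b : Fin n} (hab : a ≠ b)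
    (f : Fin n → M) (hf : ∀ j, j ≠ a → j ≠ b → f j = 0) :
    ∑ j, f j = f a + f b := by
  rw [← Finset.sum_pair hab]
  symm
  apply Finset.sum_subset (Finset.subset_univ _)
  intro j _ hj
  simp only [Finset.mem_insert, Finset.mem_singleton] at hj
  push_neg at hj
  exact hf j hj.1 hj.2

/-- the standardly extended code of the cyclic code of length
`n = λ(q^m-1)/(q-1)` with generator polynomial `M_α(x)` (equivalently, the code of
words vanishing at the primitive `n`-th root of unity `α`) has parameters
`[n+1, n-m, 3]`. -/
theorem stmt8 {F K : Type*} [Field F] [Fintype F] [DecidableEq F]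
    [Field K] [Fintype K] [Algebra F K]
    (q m lam n : ℕ) (hF : Fintype.card F = q) (hq : 2 < q) (hm : 2 ≤ m)
    (hK : Fintype.card K = q ^ m)
    (hlam : lam ∣ q - 1) (hn : n * (q - 1) = lam * (q ^ m - 1))
    (hgcd : 1 < Nat.gcd (m * lam) (q - 1))
    (α : K) (hα : IsPrimitiveRoot α n)
    (C : Submodule F (Fin n → F))
    (hC : ∀ c, c ∈ C ↔ ∑ j, algebraMap F K (c j) * α ^ (j : ℕ) = 0) :
    Module.finrank F (extCode C (fun _ => -1)) = n - m ∧
    minDist (extCode C (fun _ => -1)) = 3 := by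
    classical
  -- basic numerics
  have hq1 : (1:ℕ) ≤ q := by omega
  have hlam0 : 0 < lam := by
    rcases Nat.eq_zero_or_pos lam with h | h
    · subst h; rw [zero_dvd_iff] at hlam; omega
    · exact h
  have hqmq : q ≤ q ^ m := Nat.le_self_pow (by omega) q
  have hqm1 : 1 ≤ q ^ m := by omega
  have hn0 : 0 < n := by
    rcases Nat.eq_zero_or_pos n with h | h
    · exfalso
      rw [h, zero_mul] at hn
      have := Nat.mul_pos hlam0 (show 0 < q ^ m - 1 by omega)
      omega
    · exact h
  have hαn : α ^ n = 1 := hα.pow_eq_one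
  have hα0 : α ≠ 0 := by
    intro h
    rw [h, zero_pow hn0.ne'] at hαn
    exact one_ne_zero hαn.symm
  -- geometric sum identity
  have hgeom : (∑ i ∈ Finset.range m, q ^ i) * (q - 1) = q ^ m - 1 := by
    have h := geom_sum_mul (q : ℤ) m
    zify [hq1, hqm1]
    push_cast
    exact h
  have hnls : n = lam * (∑ i ∈ Finset.range m, q ^ i) := by
    apply Nat.eq_of_mul_eq_mul_right (show 0 < q - 1 by omega)
    rw [hn, ← hgeom]
    ring
  -- gcd(n, q-1) > 1
  have hdgcd : 1 < Nat.gcd n (q - 1) := by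
    set p := (Nat.gcd (m * lam) (q - 1)).minFac with hp
    have hpp : p.Prime := Nat.minFac_prime (by omega)
    have hpml : p ∣ m * lam := dvd_trans (Nat.minFac_dvd _) (Nat.gcd_dvd_left _ _)
    have hpq : p ∣ q - 1 := dvd_trans (Nat.minFac_dvd _) (Nat.gcd_dvd_right _ _)
    have hpn : p ∣ n := by
      rcases hpp.dvd_mul.mp hpml with hpm | hpl
      · have hq1p : ((q : ZMod p)) = 1 := by
          have h0 : ((q - 1 : ℕ) : ZMod p) = 0 :=
            (ZMod.natCast_eq_zero_iff _ _).mpr hpq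
          have hq' : q = (q - 1) + 1 := by omega
          rw [hq', Nat.cast_add, h0, Nat.cast_one, zero_add]
        have hps : p ∣ ∑ i ∈ Finset.range m, q ^ i := by
          rw [← ZMod.natCast_eq_zero_iff]
          calc ((∑ i ∈ Finset.range m, q ^ i : ℕ) : ZMod p)
              = ∑ i ∈ Finset.range m, ((q : ZMod p)) ^ i := by push_cast; rfl
            _ = ∑ _i ∈ Finset.range m, (1 : ZMod p) :=
                Finset.sum_congr rfl fun i _ => by rw [hq1p, one_pow]
            _ = (m : ZMod p) := by simp
            _ = 0 := (ZMod.natCast_eq_zero_iff _ _).mpr hpm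
        rw [hnls]
        exact Dvd.dvd.mul_left hps lam
      · rw [hnls]
        exact Dvd.dvd.mul_right hpl _
    have h1 : p ∣ Nat.gcd n (q - 1) := Nat.dvd_gcd hpn hpq
    have h2 : 0 < Nat.gcd n (q - 1) := Nat.gcd_pos_of_pos_left _ hn0
    have h3 := Nat.le_of_dvd h2 h1
    have h4 := hpp.two_le
    omega
  -- finrank of K over F
  have hfrK : Module.finrank F K = m := by
    have h1 : Fintype.card K = q ^ Module.finrank F K := by
      rw [Module.card_eq_pow_finrank (K := F) (V := K), hF]
    rw [hK] at h1
    exact (Nat.pow_right_injective (by omega) h1).symm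
  -- the minimal polynomial of α has degree m
  have hint : IsIntegral F α := IsIntegral.of_finite F α
  have hfrL : Module.finrank F (IntermediateField.adjoin F {α}) = (minpoly F α).natDegree :=
    IntermediateField.adjoin.finrank hint
  haveI : Fintype (IntermediateField.adjoin F {α}) := Fintype.ofFinite _
  have hcardL : Fintype.card (IntermediateField.adjoin F {α}) =
      q ^ Module.finrank F (IntermediateField.adjoin F {α}) := by
    rw [Module.card_eq_pow_finrank (K := F) (V := (IntermediateField.adjoin F {α})), hF]
  have hαL : α ∈ IntermediateField.adjoin F {α} :=
    IntermediateField.mem_adjoin_simple_self F α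
  have hβ0 : (⟨α, hαL⟩ : IntermediateField.adjoin F {α}) ≠ 0 := by
    intro h
    exact hα0 (congrArg Subtype.val h)
  have hord : orderOf (⟨α, hαL⟩ : IntermediateField.adjoin F {α}) = n := by
    have h1 : orderOf (algebraMap (IntermediateField.adjoin F {α}) K ⟨α, hαL⟩) =
        orderOf (⟨α, hαL⟩ : IntermediateField.adjoin F {α}) :=
      orderOf_injective (algebraMap (IntermediateField.adjoin F {α}) K).toMonoidHom
        (algebraMap (IntermediateField.adjoin F {α}) K).injective _
    have h2 : algebraMap (IntermediateField.adjoin F {α}) K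
        (⟨α, hαL⟩ : IntermediateField.adjoin F {α}) = α := rfl
    rw [h2] at h1
    rw [← h1, ← hα.eq_orderOf]
  have hnle : n ≤ Fintype.card (IntermediateField.adjoin F {α}) - 1 := by
    have h1 : orderOf (Units.mk0 (⟨α, hαL⟩ : IntermediateField.adjoin F {α}) hβ0) = n := by
      rw [← hord, ← orderOf_units, Units.val_mk0]
    have h2 : orderOf (Units.mk0 (⟨α, hαL⟩ : IntermediateField.adjoin F {α}) hβ0) ≤
        Fintype.card (IntermediateField.adjoin F {α})ˣ := orderOf_le_card_univ
    have hcu : Fintype.card (↥(IntermediateField.adjoin F {α}))ˣ =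
        Fintype.card (↥(IntermediateField.adjoin F {α})) - 1 := Fintype.card_units _
    rw [hcu] at h2
    omega
  have hd'le : Module.finrank F (IntermediateField.adjoin F {α}) ≤ m := by
    have hle : Fintype.card (IntermediateField.adjoin F {α}) ≤ Fintype.card K :=
      Fintype.card_le_of_injective _ Subtype.val_injective
    rw [hcardL, hK] at hle
    exact (Nat.pow_le_pow_iff_right (by omega)).mp hle
  have hfm : Module.finrank F (IntermediateField.adjoin F {α}) = m := by
    by_contra hne
    refine aux_arith (n := n) (show 3 ≤ q by omega) hm
      (show Module.finrank F (IntermediateField.adjoin F {α}) ≤ m - 1 by omega) ?_ ?_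
    · rw [← hcardL]
      exact hnle
    · calc q ^ m - 1 ≤ lam * (q ^ m - 1) := Nat.le_mul_of_pos_left _ hlam0
        _ = n * (q - 1) := hn.symm
  have hdeg : (minpoly F α).natDegree = m := hfrL.symm.trans hfm
  -- the evaluation linear map
  set φ : (Fin n → F) →ₗ[F] K :=
    { toFun := fun c => ∑ j, algebraMap F K (c j) * α ^ (j : ℕ)
      map_add' := fun a b => by
        simp only [Pi.add_apply, map_add, add_mul]
        rw [Finset.sum_add_distrib]
      map_smul' := fun a yy => by
        simp only [Pi.smul_apply, smul_eq_mul, map_mul, RingHom.id_apply]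
        rw [Finset.smul_sum]
        refine Finset.sum_congr rfl fun j _ => ?_
        rw [Algebra.smul_def, mul_assoc] } with hφdef
  have hφs : ∀ v : Fin n → F, φ v = ∑ j, algebraMap F K (v j) * α ^ (j : ℕ) := fun v => rfl
  have hCker : C = LinearMap.ker φ := by
    ext c
    rw [hC c]
    exact Iff.symm LinearMap.mem_ker
  -- m ≤ n
  have hsm : m ≤ ∑ i ∈ Finset.range m, q ^ i := by
    calc m = ∑ _i ∈ Finset.range m, 1 := by simp
      _ ≤ ∑ i ∈ Finset.range m, q ^ i :=
        Finset.sum_le_sum fun i _ => Nat.one_le_pow _ _ (by omega)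
  have hmn : m ≤ n := by
    rw [hnls]
    exact le_trans hsm (Nat.le_mul_of_pos_left _ hlam0)
  -- the rank of φ is m
  have hrange : Module.finrank F (LinearMap.range φ) = m := by
    have hle : Module.finrank F (LinearMap.range φ) ≤ m := by
      rw [← hfrK]; exact Submodule.finrank_le _
    have li : LinearIndependent F fun i : Fin m => α ^ (i : ℕ) := by
      have h := linearIndependent_pow (K := F) α
      rwa [hdeg] at h
    have hmem : ∀ i : Fin m, α ^ (i : ℕ) ∈ LinearMap.range φ := by
      intro i
      have hilt : (i : ℕ) < n := lt_of_lt_of_le i.isLt hmn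
      refine ⟨Pi.single (⟨(i : ℕ), hilt⟩ : Fin n) 1, ?_⟩
      rw [hφs]
      rw [Finset.sum_eq_single (⟨(i : ℕ), hilt⟩ : Fin n)]
      · simp
      · intro b _ hb
        rw [Pi.single_eq_of_ne hb, map_zero, zero_mul]
      · intro hmem'
        exact absurd (Finset.mem_univ _) hmem'
    have liv : LinearIndependent F fun i : Fin m =>
        (⟨α ^ (i : ℕ), hmem i⟩ : LinearMap.range φ) := by
      apply LinearIndependent.of_comp (LinearMap.range φ).subtype
      exact li
    have hge : m ≤ Module.finrank F (LinearMap.range φ) := by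
      simpa using liv.fintype_card_le_finrank
    exact le_antisymm hle hge
  -- dimension of C and of the extended code
  have hkerdim : Module.finrank F C = n - m := by
    have h := LinearMap.finrank_range_add_finrank_ker φ
    rw [Module.finrank_fin_fun, hrange] at h
    rw [hCker]
    exact Nat.eq_sub_of_add_eq' h
  have hEdim : Module.finrank F (extCode C (fun _ => -1)) = n - m := by
    rw [(extEquiv C (fun _ => -1)).finrank_eq]
    exact hkerdim
  -- lower bound: every nonzero codeword of the extended code has weight ≥ 3
  have hkey : ∀ y : Fin (n+1) → F, y ∈ extCode C (fun _ => -1) → y ≠ 0 →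
      3 ≤ hammingNorm y := by
    intro y hy hy0
    obtain ⟨hy1, hy2⟩ := (mem_extCode _ _ _).mp hy
    have hsum : ∑ j : Fin n, algebraMap F K (y j.castSucc) * α ^ (j : ℕ) = 0 := (hC _).mp hy1
    by_contra hcon
    push_neg at hcon
    have hham : hammingNorm y = (Finset.univ.filter (fun i : Fin (n+1) => y i ≠ 0)).card := rfl
    set S : Finset (Fin n) := Finset.univ.filter (fun j => y j.castSucc ≠ 0) with hSdef
    set T : Finset (Fin (n+1)) := Finset.univ.filter (fun i : Fin (n+1) => y i ≠ 0) with hTdef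
    have hmapST : S.image Fin.castSucc ⊆ T := by
      intro i hi
      rcases Finset.mem_image.mp hi with ⟨j, hj, rfl⟩
      rw [hSdef, Finset.mem_filter] at hj
      rw [hTdef, Finset.mem_filter]
      exact ⟨Finset.mem_univ _, hj.2⟩
    have hST : S.card ≤ T.card := by
      rw [← Finset.card_image_of_injective S (Fin.castSucc_injective n)]
      exact Finset.card_le_card hmapST
    have hT2 : T.card ≤ 2 := by omega
    have hS2 : S.card ≤ 2 := le_trans hST hT2
    have hsum' : ∑ j ∈ S, algebraMap F K (y j.castSucc) * α ^ (j : ℕ) = 0 := by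
      rw [← hsum]
      apply Finset.sum_subset (Finset.subset_univ S)
      intro j _ hj
      have h0 : y j.castSucc = 0 := by
        by_contra hne
        exact hj (by rw [hSdef, Finset.mem_filter]; exact ⟨Finset.mem_univ _, hne⟩)
      rw [h0, map_zero, zero_mul]
    rcases (show S.card = 0 ∨ S.card = 1 ∨ S.card = 2 by omega) with h0 | h1 | h2
    · -- all coordinates of the first block vanish
      have hc0 : ∀ j : Fin n, y j.castSucc = 0 := by
        intro j
        by_contra hj
        have hjS : j ∈ S := by rw [hSdef, Finset.mem_filter]; exact ⟨Finset.mem_univ _, hj⟩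
        rw [Finset.card_eq_zero.mp h0] at hjS
        exact absurd hjS (Finset.notMem_empty _)
      apply hy0
      funext i
      refine Fin.lastCases ?_ (fun j => ?_) i
      · show y (Fin.last n) = 0
        rw [hy2]
        exact Finset.sum_eq_zero fun i _ => by
          show (-1 : F) * y i.castSucc = 0
          rw [hc0 i, mul_zero]
      · show y j.castSucc = 0
        exact hc0 j
    · -- weight 1 is impossible
      obtain ⟨j₀, hj₀⟩ := Finset.card_eq_one.mp h1
      rw [hj₀, Finset.sum_singleton] at hsum'
      have hcj : y j₀.castSucc ≠ 0 := by
        have hmj : j₀ ∈ S := hj₀ ▸ Finset.mem_singleton_self j₀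
        rw [hSdef, Finset.mem_filter] at hmj
        exact hmj.2
      exact (mul_ne_zero ((map_ne_zero_iff _ (algebraMap F K).injective).mpr hcj)
        (pow_ne_zero _ hα0)) hsum'
    · -- weight 2 is impossible
      obtain ⟨i₀, j₀, hij, hSeq⟩ := Finset.card_eq_two.mp h2
      have hci : y i₀.castSucc ≠ 0 := by
        have hmi : i₀ ∈ S := by rw [hSeq]; exact Finset.mem_insert_self _ _
        rw [hSdef, Finset.mem_filter] at hmi
        exact hmi.2
      have hlast0 : y (Fin.last n) = 0 := by
        by_contra hne
        have hmemT : Fin.last n ∈ T := by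
          rw [hTdef, Finset.mem_filter]
          exact ⟨Finset.mem_univ _, hne⟩
        have hnotin : Fin.last n ∉ S.image Fin.castSucc := by
          intro hmem
          rcases Finset.mem_image.mp hmem with ⟨j', _, hj'⟩
          have hv := congrArg Fin.val hj'
          simp only [Fin.coe_castSucc, Fin.val_last] at hv
          exact absurd hv (Nat.ne_of_lt j'.isLt)
        have hsub3 : insert (Fin.last n) (S.image Fin.castSucc) ⊆ T :=
          Finset.insert_subset hmemT hmapST
        have hcard3 := Finset.card_le_card hsub3
        rw [Finset.card_insert_of_notMem hnotin,
          Finset.card_image_of_injective S (Fin.castSucc_injective n), h2] at hcard3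
        omega
      have hsumc : y i₀.castSucc + y j₀.castSucc = 0 := by
        have h4 : ∑ j ∈ S, y j.castSucc = ∑ j : Fin n, y j.castSucc :=
          Finset.sum_subset (Finset.subset_univ S) (fun j _ hj => by
            by_contra hne
            exact hj (by rw [hSdef, Finset.mem_filter]; exact ⟨Finset.mem_univ _, hne⟩))
        have h5 : ∑ j : Fin n, y j.castSucc = 0 := by
          have h6 : y (Fin.last n) = -∑ j : Fin n, y j.castSucc := by
            rw [hy2, ← Finset.sum_neg_distrib]
            exact Finset.sum_congr rfl fun j _ => by
              show (-1 : F) * y j.castSucc = -(y j.castSucc)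
              rw [neg_one_mul]
          rw [hlast0] at h6
          exact neg_eq_zero.mp h6.symm
        rw [hSeq, Finset.sum_pair hij] at h4
        exact h4.trans h5
      rw [hSeq, Finset.sum_pair hij] at hsum'
      have hcjeq : y j₀.castSucc = -(y i₀.castSucc) := eq_neg_of_add_eq_zero_right hsumc
      rw [hcjeq, map_neg] at hsum'
      have h8 : algebraMap F K (y i₀.castSucc) * (α ^ (i₀ : ℕ) - α ^ (j₀ : ℕ)) = 0 := by
        linear_combination hsum'
      rcases mul_eq_zero.mp h8 with h9 | h9
      · exact (map_ne_zero_iff _ (algebraMap F K).injective).mpr hci h9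
      · exact hij (Fin.val_injective (hα.pow_inj i₀.isLt j₀.isLt (sub_eq_zero.mp h9)))
  -- the weight-3 codeword
  have hdn : Nat.gcd n (q - 1) ∣ n := Nat.gcd_dvd_left _ _
  have hdq : Nat.gcd n (q - 1) ∣ q - 1 := Nat.gcd_dvd_right _ _
  set k := n / Nat.gcd n (q - 1) with hkdef
  have hk0 : 0 < k := Nat.div_pos (Nat.le_of_dvd hn0 hdn) (by omega)
  have hkn : k < n := Nat.div_lt_self hn0 hdgcd
  have hkd : k * Nat.gcd n (q - 1) = n := Nat.div_mul_cancel hdn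
  have hβ1 : (α ^ k) ^ (q - 1) = 1 := by
    obtain ⟨e, he⟩ := hdq
    rw [← pow_mul, he, ← mul_assoc, hkd, pow_mul, hαn, one_pow]
  have hβq : (α ^ k) ^ Fintype.card F = α ^ k := by
    rw [hF, show q = (q - 1) + 1 by omega, pow_add, hβ1, one_mul, pow_one]
  obtain ⟨b, hb⟩ := exists_algebraMap_eq (α ^ k) hβq
  have hαk1 : α ^ k ≠ 1 := hα.pow_ne_one_of_pos_of_lt hk0.ne' hkn
  have hb1 : b ≠ 1 := fun h => hαk1 (by rw [← hb, h, map_one])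
  have hb0 : b ≠ 0 := by
    intro h
    rw [h, map_zero] at hb
    exact pow_ne_zero k hα0 hb.symm
  set w : Fin (n + 1) → F := fun i =>
    if (i : ℕ) = 0 then b else if (i : ℕ) = k then -1 else if (i : ℕ) = n then 1 - b else 0
    with hwdef
  have hw0 : ∀ j : Fin n, (j : ℕ) ≠ 0 → (j : ℕ) ≠ k → w j.castSucc = 0 := by
    intro j h1 h2
    have h3 : (j : ℕ) ≠ n := by have := j.isLt; omega
    simp [hwdef, h1, h2, h3]
    exact fun h => (h1 (by simpa using congrArg Fin.val h)).elim
  have hne0k : (⟨0, hn0⟩ : Fin n) ≠ ⟨k, hkn⟩ := by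
    simp only [ne_eq, Fin.mk.injEq]
    omega
  have hwj0 : w (Fin.castSucc ⟨0, hn0⟩) = b := by
    simp [hwdef]
  have hwjk : w (Fin.castSucc ⟨k, hkn⟩) = -1 := by
    simp [hwdef, hk0.ne']
  have hwlast : w (Fin.last n) = 1 - b := by
    have h1 : n ≠ 0 := hn0.ne'
    have h2 : n ≠ k := by omega
    simp [hwdef, h1, h2]
  have hwmem : w ∈ extCode C (fun _ => -1) := by
    refine (mem_extCode _ _ _).mpr ⟨?_, ?_⟩
    · rw [hC]
      show ∑ j : Fin n, algebraMap F K (w j.castSucc) * α ^ (j : ℕ) = 0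
      rw [sum_eq_pair hne0k (fun j : Fin n => algebraMap F K (w j.castSucc) * α ^ (j : ℕ))
        (fun j h1 h2 => by
          show algebraMap F K (w j.castSucc) * α ^ (j : ℕ) = 0
          rw [hw0 j (fun hv => h1 (Fin.val_injective hv))
            (fun hv => h2 (Fin.val_injective hv)), map_zero, zero_mul])]
      simp only [hwj0, hwjk, hb, map_neg, map_one]
      show α ^ k * α ^ (0 : ℕ) + -1 * α ^ k = 0
      rw [pow_zero, mul_one, neg_one_mul, add_neg_cancel]
    · show w (Fin.last n) = ∑ i : Fin n, (-1 : F) * w i.castSucc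
      rw [hwlast, sum_eq_pair hne0k (fun j : Fin n => (-1 : F) * w j.castSucc)
        (fun j h1 h2 => by
          show (-1 : F) * w j.castSucc = 0
          rw [hw0 j (fun hv => h1 (Fin.val_injective hv))
            (fun hv => h2 (Fin.val_injective hv)), mul_zero])]
      rw [hwj0, hwjk]
      ring
  have hwne : w ≠ 0 := by
    intro h
    have h0 := congrFun h (Fin.castSucc ⟨0, hn0⟩)
    rw [hwj0] at h0
    exact hb0 h0
  have hwcard : hammingNorm w = 3 := by
    have hTeq : (Finset.univ.filter (fun i : Fin (n+1) => w i ≠ 0)) =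
        {(⟨0, by omega⟩ : Fin (n+1)), ⟨k, by omega⟩, ⟨n, by omega⟩} := by
      ext i
      simp only [Finset.mem_filter, Finset.mem_univ, true_and, Finset.mem_insert,
        Finset.mem_singleton]
      constructor
      · intro hi
        by_contra hcontra
        push_neg at hcontra
        obtain ⟨h1, h2, h3⟩ := hcontra
        have hv1 : (i : ℕ) ≠ 0 := fun hv => h1 (Fin.val_injective hv)
        have hv2 : (i : ℕ) ≠ k := fun hv => h2 (Fin.val_injective hv)
        have hv3 : (i : ℕ) ≠ n := fun hv => h3 (Fin.val_injective hv)
        apply hi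
        simp [hwdef, hv1, hv2, hv3]
        exact fun h => (hv1 (by rw [h]; simp)).elim
      · have h1b : (1 : F) ≠ b := fun h => hb1 h.symm
        have hk0' : k ≠ 0 := hk0.ne'
        have hn0' : n ≠ 0 := hn0.ne'
        have hnk : n ≠ k := by omega
        rintro (rfl | rfl | rfl)
        · simp [hwdef, hb0]
        · simp [hwdef, hk0']
        · simp [hwdef, hn0', hnk, sub_ne_zero, h1b]
    show (Finset.univ.filter (fun i : Fin (n+1) => w i ≠ 0)).card = 3
    rw [hTeq]
    have hd1 : (⟨0, by omega⟩ : Fin (n+1)) ∉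
        ({⟨k, by omega⟩, ⟨n, by omega⟩} : Finset (Fin (n+1))) := by
      simp only [Finset.mem_insert, Finset.mem_singleton, Fin.mk.injEq]
      omega
    have hd2 : (⟨k, by omega⟩ : Fin (n+1)) ∉ ({⟨n, by omega⟩} : Finset (Fin (n+1))) := by
      simp only [Finset.mem_singleton, Fin.mk.injEq]
      omega
    rw [Finset.card_insert_of_notMem hd1, Finset.card_insert_of_notMem hd2,
      Finset.card_singleton]
  refine ⟨hEdim, ?_⟩
  simp only [minDist]
  have h3mem : 3 ∈ {u : ℕ | ∃ c ∈ extCode C (fun _ => -1), c ≠ 0 ∧ hammingNorm c = u} :=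
    ⟨w, hwmem, hwne, hwcard⟩
  refine le_antisymm (Nat.sInf_le h3mem) ?_
  obtain ⟨y, hyE, hy0, hyw⟩ := Nat.sInf_mem (⟨3, h3mem⟩ :
    Set.Nonempty {u : ℕ | ∃ c ∈ extCode C (fun _ => -1), c ≠ 0 ∧ hammingNorm c = u})
  rw [← hyw]
  exact hkey y hyE hy0
end
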